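/- Let F ∈ 𝓘 with supp F ⊂ (θL, θH) and let Q be an F-ICC allocation. Then for every ū ≥ 0 the mechanism (Q, ū) is F-IC. -/

import Mathlib

open MeasureTheory Set Filter

/-- A cumulative distribution function on `[θL, θH]`. -/
structure CDF (θL θH : ℝ) where
  toFun : ℝ → ℝ
  mono : Monotone toFun
  right_continuous : ∀ x, ContinuousWithinAt toFun (Set.Ici x) x
  eq_zero : ∀ x, x < θL → toFun x = 0
  eq_one : ∀ x, θH ≤ x → toFun x = 1

namespace CDF

variable {θL θH : ℝ}

/-- The Stieltjes function associated with a CDF. -/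
noncomputable def stieltjes (F : CDF θL θH) : StieltjesFunction ℝ :=
  ⟨F.toFun, F.mono, F.right_continuous⟩

/-- The Lebesgue–Stieltjes measure of a CDF. -/
noncomputable def meas (F : CDF θL θH) : Measure ℝ := F.stieltjes.measure

/-- The integral `∫ φ dF`. -/
noncomputable def integ (F : CDF θL θH) (φ : ℝ → ℝ) : ℝ := ∫ θ, φ θ ∂F.meas

/-- The support of the distribution with CDF `F`. -/
def supp (F : CDF θL θH) : Set ℝ :=
  {x | ∀ ε > 0, 0 < F.toFun (x + ε) - F.toFun (x - ε)}

/-- The left limit `F₋`. -/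
noncomputable def leftLim (F : CDF θL θH) (x : ℝ) : ℝ := Function.leftLim F.toFun x

/-- The mean `∫ θ dF(θ)`. -/
noncomputable def mean (F : CDF θL θH) : ℝ := F.integ (fun θ => θ)

end CDF

/-- `I_F(θ) = ∫_{θL}^{θ} (F₀(t) − F(t)) dt`. -/
noncomputable def IFun {θL θH : ℝ} (F₀ F : CDF θL θH) (θ : ℝ) : ℝ :=
  ∫ t in θL..θ, (F₀.toFun t - F.toFun t)

/-- `F ∈ 𝓘`: `F` is a feasible signal given the prior `F₀`. -/
def IsSignal {θL θH : ℝ} (F₀ F : CDF θL θH) : Prop :=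
  (∀ θ ∈ Set.Icc θL θH, 0 ≤ IFun F₀ F θ) ∧ IFun F₀ F θH = 0

/-- The prior's support contains both endpoints. -/
def IsPrior {θL θH : ℝ} (F₀ : CDF θL θH) : Prop :=
  θL ∈ F₀.supp ∧ θH ∈ F₀.supp

/-- Assumptions on the information-cost function `c` (with derivatives `c'`, `c''`). -/
structure CostAssumptions (θL θH θ₀ : ℝ) (c c' c'' : ℝ → ℝ) : Prop where
  cont : ContinuousOn c (Set.Icc θL θH)
  nonneg : ∀ θ ∈ Set.Icc θL θH, 0 ≤ c θ
  hasDeriv : ∀ θ ∈ Set.Ioo θL θH, HasDerivAt c (c' θ) θ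
  hasDeriv2 : ∀ θ ∈ Set.Ioo θL θH, HasDerivAt c' (c'' θ) θ
  cont2 : ContinuousOn c'' (Set.Ioo θL θH)
  pos2 : ∀ θ ∈ Set.Ioo θL θH, 0 < c'' θ
  minAt : ∀ θ ∈ Set.Icc θL θH, c θ₀ ≤ c θ
  slopeBot : Filter.Tendsto c' (nhdsWithin θL (Set.Ioi θL)) Filter.atBot
  slopeTop : Filter.Tendsto c' (nhdsWithin θH (Set.Iio θH)) Filter.atTop

/-- Assumptions on the production-cost function `κ` (with derivative `κ'`). -/
structure KappaAssumptions (θL θH qbar : ℝ) (κ κ' : ℝ → ℝ) : Prop where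
  hasDeriv : ∀ q ∈ Set.Icc (0:ℝ) qbar, HasDerivWithinAt κ (κ' q) (Set.Icc 0 qbar) q
  contDeriv : ContinuousOn κ' (Set.Icc 0 qbar)
  strictMono : StrictMonoOn κ (Set.Icc 0 qbar)
  strictConvex : StrictConvexOn ℝ (Set.Icc 0 qbar) κ
  zero : κ 0 = 0
  nonneg : ∀ q ∈ Set.Icc (0:ℝ) qbar, 0 ≤ κ q
  derivZero : κ' 0 ≤ θL
  derivTop : θH < κ' qbar

/-- An allocation: a nondecreasing map from types into `[0, q̄]`. -/
def IsAllocation (θL θH qbar : ℝ) (Q : ℝ → ℝ) : Prop :=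
  MonotoneOn Q (Set.Icc θL θH) ∧ ∀ θ ∈ Set.Icc θL θH, Q θ ∈ Set.Icc 0 qbar

/-- The buyer's value `V_{Q,ū}(θ) = ū + ∫_{θL}^{θ} Q(t) dt`. -/
noncomputable def Vfun (θL : ℝ) (Q : ℝ → ℝ) (u θ : ℝ) : ℝ :=
  u + ∫ t in θL..θ, Q t

/-- The mechanism `(Q, ū)` is `F`-incentive compatible. -/
def IsIC {θL θH : ℝ} (F₀ : CDF θL θH) (c : ℝ → ℝ) (Q : ℝ → ℝ) (u : ℝ)
    (F : CDF θL θH) : Prop :=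
  IsSignal F₀ F ∧
  ∀ F' : CDF θL θH, IsSignal F₀ F' →
    F'.integ (fun θ => Vfun θL Q u θ - c θ) ≤ F.integ (fun θ => Vfun θL Q u θ - c θ)

/-- The monopolist's per-report profit `π_{Q,ū}(θ)`. -/
noncomputable def profit (θL : ℝ) (κ Q : ℝ → ℝ) (u θ : ℝ) : ℝ :=
  θ * Q θ - Vfun θL Q u θ - κ (Q θ)

/-- `(Q, F)` is monopolist-optimal. -/
def MonopolistOptimal {θL θH : ℝ} (qbar : ℝ) (F₀ : CDF θL θH) (c κ : ℝ → ℝ)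
    (Q : ℝ → ℝ) (F : CDF θL θH) : Prop :=
  IsAllocation θL θH qbar Q ∧ IsIC F₀ c Q 0 F ∧
  ∀ (Q' : ℝ → ℝ) (u' : ℝ) (F' : CDF θL θH),
    IsAllocation θL θH qbar Q' → 0 ≤ u' → IsIC F₀ c Q' u' F' →
    F'.integ (profit θL κ Q' u') ≤ F.integ (profit θL κ Q 0)

/-- `P` is an `F`-shadow price. -/
def IsShadowPrice {θL θH : ℝ} (F₀ F : CDF θL θH) (P : ℝ → ℝ) : Prop :=
  (∃ K : NNReal, LipschitzOnWith K P (Set.Icc θL θH)) ∧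
  ConvexOn ℝ (Set.Icc θL θH) P ∧
  ∀ a b : ℝ, Set.Ioo a b ⊆ {θ | θ ∈ Set.Icc θL θH ∧ 0 < IFun F₀ F θ} →
    ∃ m k : ℝ, ∀ θ ∈ Set.Ioo a b, P θ = m * θ + k

/-- `P` is an `F`-shadow price for `φ`. -/
def IsShadowPriceFor {θL θH : ℝ} (F₀ F : CDF θL θH) (φ P : ℝ → ℝ) : Prop :=
  IsShadowPrice F₀ F P ∧ (∀ θ ∈ Set.Icc θL θH, φ θ ≤ P θ) ∧
  ∀ θ ∈ F.supp, P θ = φ θ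

/-- `θL_F`, the minimum of the support of `F`. -/
noncomputable def thetaLF {θL θH : ℝ} (F : CDF θL θH) : ℝ := sInf F.supp

/-- `θH_F`, the maximum of the support of `F`. -/
noncomputable def thetaHF {θL θH : ℝ} (F : CDF θL θH) : ℝ := sSup F.supp

/-- `p` is an `F`-shadow derivative. -/
def IsShadowDeriv {θL θH : ℝ} (qbar : ℝ) (F₀ : CDF θL θH) (c' : ℝ → ℝ)
    (F : CDF θL θH) (p : ℝ → ℝ) : Prop :=
  (∃ M : ℝ, ∀ θ ∈ Set.Icc θL θH, |p θ| ≤ M) ∧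
  MonotoneOn p (Set.Icc θL θH) ∧
  (∀ a b : ℝ, Set.Ioo a b ⊆ {θ | θ ∈ Set.Icc θL θH ∧ 0 < IFun F₀ F θ} →
    ∀ x ∈ Set.Ioo a b, ∀ y ∈ Set.Ioo a b, p x = p y) ∧
  -c' (thetaLF F) ≤ p (thetaLF F) ∧
  p (thetaHF F) ≤ qbar - c' (thetaHF F)

/-- The allocation `Q^p` induced by a shadow derivative `p`. -/
noncomputable def inducedAlloc {θL θH : ℝ} (qbar : ℝ) (c' : ℝ → ℝ)
    (F : CDF θL θH) (p : ℝ → ℝ) (θ : ℝ) : ℝ :=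
  if θ < thetaLF F then max (p (thetaLF F) + c' θ) 0
  else if θ ≤ thetaHF F then p θ + c' θ
  else min (p (thetaHF F) + c' θ) qbar

/-- `Q` is `F`-information-cost-canceling. -/
def IsICC {θL θH : ℝ} (qbar : ℝ) (F₀ : CDF θL θH) (c' : ℝ → ℝ)
    (F : CDF θL θH) (Q : ℝ → ℝ) : Prop :=
  ∃ p : ℝ → ℝ, IsShadowDeriv qbar F₀ c' F p ∧
    ∀ θ ∈ Set.Icc θL θH, Q θ = inducedAlloc qbar c' F p θ

/-- `φ` satisfies edge irrelevance: some maximizer over CDFs with the prior mean has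
support in the open interval. -/
def EdgeIrrelevant {θL θH : ℝ} (F₀ : CDF θL θH) (φ : ℝ → ℝ) : Prop :=
  ∃ F' : CDF θL θH, F'.mean = F₀.mean ∧
    (∀ G : CDF θL θH, G.mean = F₀.mean → G.integ φ ≤ F'.integ φ) ∧
    F'.supp ⊆ Set.Ioo θL θH

/-- `θH_Q = inf {θ : Q(θ) = Q(θH)}`. -/
noncomputable def thetaHQ (θL θH : ℝ) (Q : ℝ → ℝ) : ℝ :=
  sInf {θ | θ ∈ Set.Icc θL θH ∧ Q θ = Q θH}

/-- `θL_Q = sup {θ : Q(θ) = Q(θL)}`. -/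
noncomputable def thetaLQ (θL θH : ℝ) (Q : ℝ → ℝ) : ℝ :=
  sSup {θ | θ ∈ Set.Icc θL θH ∧ Q θ = Q θL}

/-- The support of a (cumulative distribution) function `G : ℝ → ℝ`. -/
def suppOfFun (G : ℝ → ℝ) : Set ℝ := {x | ∀ ε > 0, 0 < G (x + ε) - G (x - ε)}

/-- The conditional CDF `F(·|θ ∈ [a, b])`. -/
noncomputable def condFun {θL θH : ℝ} (F : CDF θL θH) (a b θ : ℝ) : ℝ :=
  if θ < a then 0
  else (F.toFun (min θ b) - F.leftLim a) / (F.toFun b - F.leftLim a)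

/-!
Write the buyer's payoff as `g θ = g θL + ∫_{θL}^θ (Q - c')`. Then
`∫ g dG = g θL + ∫ (Q - c') (1 - G)` for every CDF `G`, so deviating from `F` to `F'` gains
`∫ (Q - c') (F - F')`. The ICC allocation has `Q - c' = p` on `[θL_F, θH_F]`; below `θL_F` we have
`F = 0` and `Q - c' ≥ p`, above `θH_F` we have `F = 1` and `Q - c' ≤ p`. Hence the gain is at most
`∫ p (F - F')`, which an integration by parts against the Stieltjes measure `dp` turns into
`-∫ (I_F' - I_F) dp`. Since `dp` does not charge the open set `{I_F > 0}`, this equals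
`-∫ I_F' dp ≤ 0`.
-/

open Topology

section Fubini

variable {α β : Type*} [MeasurableSpace α] [MeasurableSpace β] {μ : Measure α} {ν : Measure β}
  [IsFiniteMeasure μ] [SFinite ν] {S : Set (α × β)} {f : β → ℝ}

lemma integrable_setIntegral_prodMk_preimage (hS : MeasurableSet S) (hf : Integrable f ν) :
    Integrable (fun x => ∫ y in Prod.mk x ⁻¹' S, f y ∂ν) μ := by
  refine (((hf.comp_snd μ).indicator hS).integral_prod_left).congr (ae_of_all _ fun x => ?_)
  simp_rw [← integral_indicator (measurable_prodMk_left hS)]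
  rfl

theorem integral_setIntegral_prodMk_preimage (hS : MeasurableSet S) (hf : Integrable f ν) :
    ∫ x, (∫ y in Prod.mk x ⁻¹' S, f y ∂ν) ∂μ
      = ∫ y, f y * μ.real ((fun x => (x, y)) ⁻¹' S) ∂ν := by
  calc ∫ x, (∫ y in Prod.mk x ⁻¹' S, f y ∂ν) ∂μ
      = ∫ x, ∫ y, S.indicator (fun z => f z.2) (x, y) ∂ν ∂μ := by
        simp_rw [← integral_indicator (measurable_prodMk_left hS)]
        rfl
    _ = ∫ y, ∫ x, S.indicator (fun z => f z.2) (x, y) ∂μ ∂ν :=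
        integral_integral_swap ((hf.comp_snd μ).indicator hS)
    _ = ∫ y, f y * μ.real ((fun x => (x, y)) ⁻¹' S) ∂ν := by
        refine integral_congr_ae (ae_of_all _ fun y => ?_)
        dsimp only
        rw [mul_comm, ← smul_eq_mul, ← integral_indicator_const _ (measurable_prodMk_right hS)]
        rfl

end Fubini

theorem AEMeasurable.ite {α β : Type*} [MeasurableSpace α] [MeasurableSpace β] {μ : Measure α}
    {q : α → Prop} [DecidablePred q] (hq : MeasurableSet {x | q x}) {f g : α → β}
    (hf : AEMeasurable f μ) (hg : AEMeasurable g μ) :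
    AEMeasurable (fun x => if q x then f x else g x) μ := by
  refine ⟨fun x => if q x then hf.mk f x else hg.mk g x,
    Measurable.ite hq hf.measurable_mk hg.measurable_mk, ?_⟩
  filter_upwards [hf.ae_eq_mk, hg.ae_eq_mk] with x hfx hgx
  split_ifs
  exacts [hfx, hgx]

section Stieltjes

variable {P : ℝ → ℝ}

lemma Monotone.ae_eq_rightLim (hP : Monotone P) (μ : Measure ℝ) [NullSingletonClass μ] :
    P =ᵐ[μ] Function.rightLim P := by
  filter_upwards [hP.countable_not_continuousAt.ae_notMem μ] with x hx
  exact (not_not.1 hx).continuousWithinAt.rightLim_eq.symm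

lemma Monotone.stieltjesFunction_measure_eq_zero (hP : Monotone P) {U : Set ℝ} (hU : IsOpen U)
    (hconst : ∀ a b, Ioo a b ⊆ U → ∀ x ∈ Ioo a b, ∀ y ∈ Ioo a b, P x = P y) :
    hP.stieltjesFunction.measure U = 0 := by
  refine measure_null_of_locally_null U fun x hx => ?_
  obtain ⟨l, u, hxlu, hsub⟩ := mem_nhds_iff_exists_Ioo_subset.1 (hU.mem_nhds hx)
  have hrightLim : ∀ y ∈ Ioo l u, Function.rightLim P y = P x := fun y hy => by
    obtain ⟨z, hyz, hzu⟩ := exists_between hy.2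
    refine le_antisymm ((hP.rightLim_le hyz).trans_eq ?_) ((hconst l u hsub x hxlu y hy).le.trans
      (hP.le_rightLim le_rfl))
    exact hconst l u hsub z ⟨hy.1.trans hyz, hzu⟩ x hxlu
  obtain ⟨l', hll', hl'x⟩ := exists_between hxlu.1
  obtain ⟨u', hxu', hu'u⟩ := exists_between hxlu.2
  refine ⟨Ioc l' u', mem_nhdsWithin_of_mem_nhds (Ioc_mem_nhds hl'x hxu'), ?_⟩
  rw [StieltjesFunction.measure_Ioc, hP.stieltjesFunction_eq, hP.stieltjesFunction_eq,
    hrightLim u' ⟨hll'.trans (hl'x.trans hxu'), hu'u⟩,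
    hrightLim l' ⟨hll', (hl'x.trans hxu').trans hu'u⟩, sub_self, ENNReal.ofReal_zero]

lemma Monotone.rightLim_eq_add_measureReal_Ioc (hP : Monotone P) {a t : ℝ} (hat : a ≤ t) :
    Function.rightLim P t
      = Function.rightLim P a + hP.stieltjesFunction.measure.real (Ioc a t) := by
  rw [measureReal_def, StieltjesFunction.measure_Ioc,
    ENNReal.toReal_ofReal (sub_nonneg.2 (hP.stieltjesFunction.mono hat)),
    hP.stieltjesFunction_eq, hP.stieltjesFunction_eq]
  ring

theorem Monotone.setIntegral_mul_eq (hP : Monotone P) {a b : ℝ} {d : ℝ → ℝ}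
    (hd : IntegrableOn d (Ioo a b)) :
    ∫ t in Ioo a b, P t * d t = Function.rightLim P a * (∫ t in Ioo a b, d t)
      + ∫ s in Ioc a b, (∫ t in Ico s b, d t) ∂hP.stieltjesFunction.measure := by
  set ν := hP.stieltjesFunction.measure
  set μ := ν.restrict (Ioc a b)
  have : IsFiniteMeasure μ := isFiniteMeasure_restrict.2 measure_Ioc_lt_top.ne
  have hrightLim :
      ∀ t ∈ Ioo a b, Function.rightLim P t = Function.rightLim P a + μ.real (Iic t) :=
    fun t ht => by
      rw [hP.rightLim_eq_add_measureReal_Ioc ht.1.le, measureReal_restrict_apply measurableSet_Iic,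
        Iic_inter_Ioc_of_le ht.2.le]
  have hμIic : Integrable (fun t => d t * μ.real (Iic t)) (volume.restrict (Ioo a b)) :=
    have hmono : Monotone fun t => μ.real (Iic t) :=
      fun s t hst => measureReal_mono (Iic_subset_Iic.2 hst)
    hd.mul_bdd hmono.measurable.aestronglyMeasurable
      (ae_of_all _ fun t => by
        rw [Real.norm_of_nonneg measureReal_nonneg]
        exact measureReal_mono (subset_univ _))
  have hS : MeasurableSet {z : ℝ × ℝ | z.1 ≤ z.2} := measurableSet_le measurable_fst measurable_snd
  calc ∫ t in Ioo a b, P t * d t = ∫ t in Ioo a b, Function.rightLim P t * d t :=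
        integral_congr_ae <| by
          filter_upwards [ae_restrict_of_ae (hP.ae_eq_rightLim volume)] with t ht
          rw [ht]
    _ = ∫ t in Ioo a b, (Function.rightLim P a * d t + d t * μ.real (Iic t)) :=
        setIntegral_congr_fun measurableSet_Ioo fun t ht => by
          simp only [hrightLim t ht]
          ring
    _ = Function.rightLim P a * (∫ t in Ioo a b, d t)
          + ∫ s, (∫ t in Ici s, d t ∂volume.restrict (Ioo a b)) ∂μ := by
        rw [integral_add (hd.const_mul _) hμIic, integral_const_mul]
        congr 1
        exact (integral_setIntegral_prodMk_preimage (μ := μ) hS hd).symm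
    _ = Function.rightLim P a * (∫ t in Ioo a b, d t)
          + ∫ s in Ioc a b, (∫ t in Ico s b, d t) ∂ν := by
        congr 1
        refine setIntegral_congr_fun measurableSet_Ioc fun s hs => ?_
        have hsection : Ici s ∩ Ioo a b = Ico s b :=
          Set.ext fun t => ⟨fun ht => ⟨ht.1, ht.2.2⟩, fun ht => ⟨ht.1, hs.1.trans_le ht.1, ht.2⟩⟩
        rw [Measure.restrict_restrict measurableSet_Ici, hsection]

end Stieltjes

theorem integrableOn_deriv_of_monotoneOn {g g' : ℝ → ℝ} {a b : ℝ}
    (hcont : ContinuousOn g (Icc a b)) (hderiv : ∀ x ∈ Ioo a b, HasDerivAt g (g' x) x)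
    (hmono : MonotoneOn g' (Ioo a b)) : IntegrableOn g' (Ioo a b) := by
  rcases le_or_gt b a with hba | hab
  · rw [Ioo_eq_empty_of_le hba]
    exact integrableOn_empty
  obtain ⟨m, hm⟩ := exists_between hab
  have hlower : IntegrableOn (fun x => g' m - g' x) (Ioc a m) :=
    intervalIntegral.integrableOn_deriv_of_nonneg (g := fun x => g' m * x - g x)
      ((continuousOn_const.mul continuousOn_id).sub (hcont.mono (Icc_subset_Icc_right hm.2.le)))
      (fun x hx => by
        have := ((hasDerivAt_id' x).const_mul (g' m)).sub (hderiv x ⟨hx.1, hx.2.trans hm.2⟩)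
        rwa [mul_one] at this)
      fun x hx => sub_nonneg.2 (hmono ⟨hx.1, hx.2.trans hm.2⟩ hm hx.2.le)
  have hupper : IntegrableOn (fun x => g' x - g' m) (Ioc m b) :=
    intervalIntegral.integrableOn_deriv_of_nonneg (g := fun x => g x - g' m * x)
      ((hcont.mono (Icc_subset_Icc_left hm.1.le)).sub (continuousOn_const.mul continuousOn_id))
      (fun x hx => by
        have := (hderiv x ⟨hm.1.trans hx.1, hx.2⟩).sub ((hasDerivAt_id' x).const_mul (g' m))
        rwa [mul_one] at this)
      fun x hx => sub_nonneg.2 (hmono hm ⟨hm.1.trans hx.1, hx.2⟩ hx.1.le)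
  have hcover : Ioo a b ⊆ Ioc a m ∪ Ioc m b := fun x hx =>
    (le_or_gt x m).imp (fun h => ⟨hx.1, h⟩) fun h => ⟨h, hx.2.le⟩
  refine IntegrableOn.mono_set (IntegrableOn.union ?_ ?_) hcover
  · exact ((integrableOn_const (C := g' m) measure_Ioc_lt_top.ne).sub hlower).congr_fun
      (fun x _ => sub_sub_cancel _ _) measurableSet_Ioc
  · exact (hupper.add (integrableOn_const (C := g' m) measure_Ioc_lt_top.ne)).congr_fun
      (fun x _ => sub_add_cancel _ _) measurableSet_Ioc

namespace CostAssumptions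

variable {θL θH θ₀ : ℝ} {c c' c'' : ℝ → ℝ}

lemma monotoneOn_deriv (hc : CostAssumptions θL θH θ₀ c c' c'') : MonotoneOn c' (Ioo θL θH) :=
  monotoneOn_of_hasDerivWithinAt_nonneg (convex_Ioo θL θH)
    (fun x hx => (hc.hasDeriv2 x hx).continuousAt.continuousWithinAt)
    (fun x hx => (hc.hasDeriv2 x (interior_subset hx)).hasDerivWithinAt)
    fun x hx => (hc.pos2 x (interior_subset hx)).le

lemma integrableOn_deriv (hc : CostAssumptions θL θH θ₀ c c' c'') : IntegrableOn c' (Ioo θL θH) :=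
  integrableOn_deriv_of_monotoneOn hc.cont hc.hasDeriv hc.monotoneOn_deriv

lemma integral_deriv (hc : CostAssumptions θL θH θ₀ c c' c'') {θ : ℝ} (hθ : θ ∈ Icc θL θH) :
    ∫ t in θL..θ, c' t = c θ - c θL := by
  refine intervalIntegral.integral_eq_sub_of_hasDerivAt_of_le hθ.1
    (hc.cont.mono (Icc_subset_Icc_right hθ.2))
    (fun x hx => hc.hasDeriv x ⟨hx.1, hx.2.trans_le hθ.2⟩) ?_
  rw [intervalIntegrable_iff_integrableOn_Ioo_of_le hθ.1]
  exact hc.integrableOn_deriv.mono_set (Ioo_subset_Ioo_right hθ.2)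

end CostAssumptions

namespace CDF

variable {θL θH : ℝ} (G : CDF θL θH)

lemma toFun_nonneg (x : ℝ) : 0 ≤ G.toFun x := by
  rcases lt_or_ge x θL with h | h
  · rw [G.eq_zero x h]
  · exact (G.eq_zero _ (sub_one_lt θL)).symm.le.trans (G.mono (by linarith))

lemma toFun_le_one (x : ℝ) : G.toFun x ≤ 1 := by
  rcases le_or_gt θH x with h | h
  · rw [G.eq_one x h]
  · exact (G.mono h.le).trans (G.eq_one _ le_rfl).le

lemma tendsto_atBot : Tendsto G.toFun atBot (𝓝 0) :=
  tendsto_const_nhds.congr' <| by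
    filter_upwards [eventually_lt_atBot θL] with x hx using (G.eq_zero x hx).symm

lemma tendsto_atTop : Tendsto G.toFun atTop (𝓝 1) :=
  tendsto_const_nhds.congr' <| by
    filter_upwards [eventually_ge_atTop θH] with x hx using (G.eq_one x hx).symm

instance isProbabilityMeasure_meas : IsProbabilityMeasure G.meas :=
  G.stieltjes.isProbabilityMeasure G.tendsto_atBot G.tendsto_atTop

lemma meas_real_Ioi (x : ℝ) : G.meas.real (Ioi x) = 1 - G.toFun x := by
  rw [measureReal_def, meas, G.stieltjes.measure_Ioi G.tendsto_atTop]
  exact ENNReal.toReal_ofReal (sub_nonneg.2 (G.toFun_le_one x))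

lemma ae_mem_Icc : ∀ᵐ θ ∂G.meas, θ ∈ Icc θL θH := by
  have hleft : Function.leftLim G.toFun θL = 0 :=
    leftLim_eq_of_tendsto (tendsto_const_nhds.congr' <| by
      filter_upwards [self_mem_nhdsWithin] with x hx using (G.eq_zero x hx).symm)
  have hIio : G.meas (Iio θL) = 0 := by
    rw [meas, G.stieltjes.measure_Iio G.tendsto_atBot]
    simp [stieltjes, hleft]
  have hIoi : G.meas (Ioi θH) = 0 := by
    rw [meas, G.stieltjes.measure_Ioi G.tendsto_atTop]
    simp [stieltjes, G.eq_one θH le_rfl]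
  rw [ae_iff]
  refine measure_mono_null (fun x hx => ?_) (measure_union_null hIio hIoi)
  simp only [mem_ofPred_eq, mem_Icc, not_and_or, not_le] at hx
  exact hx

theorem integ_eq_add_setIntegral {g q : ℝ → ℝ} (hq : IntegrableOn q (Ioo θL θH))
    (hg : ∀ θ ∈ Icc θL θH, g θ = g θL + ∫ t in θL..θ, q t) :
    G.integ g = g θL + ∫ t in Ioo θL θH, q t * (1 - G.toFun t) := by
  set S : Set (ℝ × ℝ) := {z | z.2 < z.1}
  have hS : MeasurableSet S := measurableSet_lt measurable_snd measurable_fst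
  have hsection : ∀ θ ∈ Icc θL θH,
      ∫ t in θL..θ, q t = ∫ t in Prod.mk θ ⁻¹' S, q t ∂volume.restrict (Ioo θL θH) := by
    intro θ hθ
    change _ = ∫ t in Iio θ, q t ∂volume.restrict (Ioo θL θH)
    rw [Measure.restrict_restrict measurableSet_Iio, intervalIntegral.integral_of_le hθ.1,
      integral_Ioc_eq_integral_Ioo, Iio_inter_Ioo, min_eq_left hθ.2]
  calc G.integ g
      = ∫ θ, (g θL + ∫ t in Prod.mk θ ⁻¹' S, q t ∂volume.restrict (Ioo θL θH)) ∂G.meas :=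
        integral_congr_ae <| by
          filter_upwards [G.ae_mem_Icc] with θ hθ
          rw [hg θ hθ, hsection θ hθ]
    _ = g θL + ∫ t in Ioo θL θH, q t * G.meas.real (Ioi t) := by
        rw [integral_add (integrable_const _) (integrable_setIntegral_prodMk_preimage hS hq),
          integral_const, integral_setIntegral_prodMk_preimage hS hq]
        simp only [probReal_univ, one_smul]
        rfl
    _ = g θL + ∫ t in Ioo θL θH, q t * (1 - G.toFun t) := by
        simp_rw [G.meas_real_Ioi]

lemma integrableOn_mul_one_sub {q : ℝ → ℝ} {s : Set ℝ} (hq : IntegrableOn q s) :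
    IntegrableOn (fun t => q t * (1 - G.toFun t)) s :=
  hq.mul_bdd (c := 1) (measurable_const.sub G.mono.measurable).aestronglyMeasurable
    (ae_of_all _ fun t => by
      rw [Real.norm_eq_abs, abs_le]
      constructor <;> linarith [G.toFun_nonneg t, G.toFun_le_one t])

lemma integrableOn_mul_toFun_sub (F F' : CDF θL θH) {q : ℝ → ℝ} {s : Set ℝ}
    (hq : IntegrableOn q s) : IntegrableOn (fun t => q t * (F.toFun t - F'.toFun t)) s :=
  hq.mul_bdd (c := 1) (F.mono.measurable.sub F'.mono.measurable).aestronglyMeasurable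
    (ae_of_all _ fun t => by
      rw [Real.norm_eq_abs, abs_le]
      constructor <;> linarith [F.toFun_nonneg t, F.toFun_le_one t, F'.toFun_nonneg t,
        F'.toFun_le_one t])

theorem integ_le_integ_of_setIntegral_mul_sub_nonpos {F F' : CDF θL θH} {g q : ℝ → ℝ}
    (hq : IntegrableOn q (Ioo θL θH)) (hg : ∀ θ ∈ Icc θL θH, g θ = g θL + ∫ t in θL..θ, q t)
    (h : ∫ t in Ioo θL θH, q t * (F.toFun t - F'.toFun t) ≤ 0) : F'.integ g ≤ F.integ g := by
  have hdiff : (∫ t in Ioo θL θH, q t * (1 - F'.toFun t)) - ∫ t in Ioo θL θH, q t * (1 - F.toFun t)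
      = ∫ t in Ioo θL θH, q t * (F.toFun t - F'.toFun t) := by
    rw [← integral_sub (F'.integrableOn_mul_one_sub hq) (F.integrableOn_mul_one_sub hq)]
    congr 1 with t
    ring
  rw [F.integ_eq_add_setIntegral hq hg, F'.integ_eq_add_setIntegral hq hg]
  linarith

lemma exists_mem_supp_of_lt {a b : ℝ} (h : G.toFun a < G.toFun b) :
    ∃ x ∈ G.supp, a ≤ x ∧ x ≤ b := by
  set S : Set ℝ := {x | G.toFun x ≤ G.toFun a}
  have hSb : ∀ y ∈ S, y ≤ b := fun y hy =>
    le_of_not_gt fun hby => (G.mono hby.le).trans hy |>.not_gt h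
  have hbdd : BddAbove S := ⟨b, hSb⟩
  have haS : a ∈ S := le_refl (G.toFun a)
  refine ⟨sSup S, fun ε hε => ?_, le_csSup hbdd haS, csSup_le ⟨a, haS⟩ hSb⟩
  have hright : G.toFun a < G.toFun (sSup S + ε) :=
    lt_of_not_ge fun hle => (le_csSup hbdd hle).not_gt (lt_add_of_pos_right _ hε)
  obtain ⟨y, hyS, hy⟩ := exists_lt_of_lt_csSup ⟨a, haS⟩ (sub_lt_self (sSup S) hε)
  linarith [G.mono hy.le, show G.toFun y ≤ G.toFun a from hyS]

lemma supp_nonempty : G.supp.Nonempty := by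
  have h : G.toFun (θL - 1) < G.toFun θH := by
    rw [G.eq_zero _ (sub_one_lt θL), G.eq_one _ le_rfl]
    exact one_pos
  obtain ⟨x, hx, -⟩ := G.exists_mem_supp_of_lt h
  exact ⟨x, hx⟩

variable {F : CDF θL θH}

lemma bddBelow_supp (hsupp : F.supp ⊆ Ioo θL θH) : BddBelow F.supp :=
  ⟨θL, fun _ hy => (hsupp hy).1.le⟩

lemma bddAbove_supp (hsupp : F.supp ⊆ Ioo θL θH) : BddAbove F.supp :=
  ⟨θH, fun _ hy => (hsupp hy).2.le⟩

lemma thetaLF_mem_Icc (hsupp : F.supp ⊆ Ioo θL θH) : thetaLF F ∈ Icc θL θH := by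
  obtain ⟨x, hx⟩ := F.supp_nonempty
  exact ⟨le_csInf ⟨x, hx⟩ fun y hy => (hsupp hy).1.le,
    (csInf_le (bddBelow_supp hsupp) hx).trans (hsupp hx).2.le⟩

lemma thetaHF_mem_Icc (hsupp : F.supp ⊆ Ioo θL θH) : thetaHF F ∈ Icc θL θH := by
  obtain ⟨x, hx⟩ := F.supp_nonempty
  exact ⟨(hsupp hx).1.le.trans (le_csSup (bddAbove_supp hsupp) hx),
    csSup_le ⟨x, hx⟩ fun y hy => (hsupp hy).2.le⟩

lemma toFun_eq_zero_of_lt_thetaLF (hsupp : F.supp ⊆ Ioo θL θH) {t : ℝ} (ht : t < thetaLF F) :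
    F.toFun t = 0 := by
  refine le_antisymm (not_lt.1 fun hpos => ?_) (F.toFun_nonneg t)
  rw [← F.eq_zero _ (sub_one_lt θL)] at hpos
  obtain ⟨x, hx, -, hxt⟩ := F.exists_mem_supp_of_lt hpos
  exact (csInf_le (bddBelow_supp hsupp) hx).not_gt (hxt.trans_lt ht)

lemma toFun_eq_one_of_thetaHF_lt (hsupp : F.supp ⊆ Ioo θL θH) {t : ℝ} (ht : thetaHF F < t) :
    F.toFun t = 1 := by
  refine le_antisymm (F.toFun_le_one t) (not_lt.1 fun hlt => ?_)
  rw [← F.eq_one (θH + 1) (by linarith)] at hlt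
  obtain ⟨x, hx, htx, -⟩ := F.exists_mem_supp_of_lt hlt
  exact (le_csSup (bddAbove_supp hsupp) hx).not_gt (ht.trans_le htx)

end CDF

section Signals

variable {θL θH : ℝ} {F₀ F F' : CDF θL θH}

lemma intervalIntegrable_toFun_sub (F F' : CDF θL θH) (a b : ℝ) :
    IntervalIntegrable (fun t => F.toFun t - F'.toFun t) volume a b :=
  F.mono.intervalIntegrable.sub F'.mono.intervalIntegrable

lemma continuous_IFun (F₀ F : CDF θL θH) : Continuous (IFun F₀ F) :=
  intervalIntegral.continuous_primitive (intervalIntegrable_toFun_sub F₀ F) θL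

lemma IFun_sub_IFun (F₀ F F' : CDF θL θH) (x : ℝ) :
    IFun F₀ F' x - IFun F₀ F x = ∫ t in θL..x, (F.toFun t - F'.toFun t) := by
  rw [IFun, IFun, ← intervalIntegral.integral_sub (intervalIntegrable_toFun_sub F₀ F' θL x)
    (intervalIntegrable_toFun_sub F₀ F θL x)]
  congr 1 with t
  ring

lemma setIntegral_Ico_toFun_sub (hF : IsSignal F₀ F) (hF' : IsSignal F₀ F')
    {s : ℝ} (hs : s ∈ Icc θL θH) :
    ∫ t in Ico s θH, (F.toFun t - F'.toFun t) = IFun F₀ F s - IFun F₀ F' s := by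
  rw [integral_Ico_eq_integral_Ioo, ← integral_Ioc_eq_integral_Ioo,
    ← intervalIntegral.integral_of_le hs.2,
    ← intervalIntegral.integral_interval_sub_left (intervalIntegrable_toFun_sub F F' θL θH)
      (intervalIntegrable_toFun_sub F F' θL s),
    ← IFun_sub_IFun, ← IFun_sub_IFun, hF.2, hF'.2]
  ring

theorem setIntegral_mul_toFun_sub_nonpos (hθ : θL < θH) (hF : IsSignal F₀ F)
    (hF' : IsSignal F₀ F') {P : ℝ → ℝ} (hP : Monotone P)
    (hPconst : ∀ a b : ℝ, Ioo a b ⊆ {θ | θ ∈ Icc θL θH ∧ 0 < IFun F₀ F θ} →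
      ∀ x ∈ Ioo a b, ∀ y ∈ Ioo a b, P x = P y) :
    ∫ t in Ioo θL θH, P t * (F.toFun t - F'.toFun t) ≤ 0 := by
  have htotal : ∫ t in Ioo θL θH, (F.toFun t - F'.toFun t) = 0 := by
    rw [← integral_Ico_eq_integral_Ioo, setIntegral_Ico_toFun_sub hF hF' (left_mem_Icc.2 hθ.le),
      IFun, IFun, intervalIntegral.integral_same, intervalIntegral.integral_same, sub_self]
  have hνU : hP.stieltjesFunction.measure (Ioo θL θH ∩ {s | 0 < IFun F₀ F s}) = 0 :=
    hP.stieltjesFunction_measure_eq_zero (isOpen_Ioo.inter (isOpen_lt continuous_const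
      (continuous_IFun F₀ F))) fun a b hab => hPconst a b fun x hx =>
        ⟨Ioo_subset_Icc_self (hab hx).1, (hab hx).2⟩
  rw [hP.setIntegral_mul_eq ((intervalIntegrable_toFun_sub F F' θL θH).1.mono_set
    Ioo_subset_Ioc_self), htotal, mul_zero, zero_add]
  refine setIntegral_nonpos_ae measurableSet_Ioc ?_
  filter_upwards [measure_eq_zero_iff_ae_notMem.1 hνU] with s hsU hs
  rw [setIntegral_Ico_toFun_sub hF hF' (Ioc_subset_Icc_self hs)]
  have hIF : IFun F₀ F s ≤ 0 := by
    rcases hs.2.lt_or_eq with hsθH | rfl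
    · exact not_lt.1 fun hpos => hsU ⟨⟨hs.1, hsθH⟩, hpos⟩
    · exact hF.2.le
  linarith [hF'.1 s (Ioc_subset_Icc_self hs)]

end Signals

section InducedAlloc

variable {θL θH qbar : ℝ} {c' p : ℝ → ℝ} {F : CDF θL θH}

lemma aemeasurable_inducedAlloc {μ : Measure ℝ} (hc : AEMeasurable c' μ) (hp : AEMeasurable p μ) :
    AEMeasurable (inducedAlloc qbar c' F p) μ :=
  AEMeasurable.ite measurableSet_Iio ((aemeasurable_const.add hc).max aemeasurable_const)
    (AEMeasurable.ite measurableSet_Iic (hp.add hc)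
      ((aemeasurable_const.add hc).min aemeasurable_const))

lemma abs_inducedAlloc_le (θ : ℝ) :
    |inducedAlloc qbar c' F p θ|
      ≤ |p (thetaLF F)| + |p θ| + |p (thetaHF F)| + |qbar| + |c' θ| := by
  have h₁ := abs_nonneg (p (thetaLF F))
  have h₂ := abs_nonneg (p θ)
  have h₃ := abs_nonneg (p (thetaHF F))
  have h₄ := abs_nonneg qbar
  have h₅ := abs_nonneg (c' θ)
  unfold inducedAlloc
  split_ifs
  · rw [abs_of_nonneg (le_max_right _ _)]
    exact max_le (by linarith [le_abs_self (p (thetaLF F)), le_abs_self (c' θ)]) (by positivity)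
  · linarith [abs_add_le (p θ) (c' θ)]
  · refine abs_le.2 ⟨?_, (min_le_right _ _).trans (by linarith [le_abs_self qbar])⟩
    refine le_min ?_ (by linarith [neg_abs_le qbar])
    linarith [neg_abs_le (p (thetaHF F)), neg_abs_le (c' θ)]

lemma inducedAlloc_sub_mul_le (hsupp : F.supp ⊆ Ioo θL θH) (hp : MonotoneOn p (Icc θL θH))
    (F' : CDF θL θH) {t : ℝ} (ht : t ∈ Icc θL θH) :
    (inducedAlloc qbar c' F p t - c' t) * (F.toFun t - F'.toFun t)
      ≤ p t * (F.toFun t - F'.toFun t) := by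
  unfold inducedAlloc
  split_ifs with hlow hmid
  · have hF0 := CDF.toFun_eq_zero_of_lt_thetaLF hsupp hlow
    have hpt := hp ht (CDF.thetaLF_mem_Icc hsupp) hlow.le
    rw [hF0, zero_sub]
    nlinarith [le_max_left (p (thetaLF F) + c' t) 0, F'.toFun_nonneg t]
  · rw [add_sub_cancel_right]
  · have hF1 := CDF.toFun_eq_one_of_thetaHF_lt hsupp (not_le.1 hmid)
    have hpt := hp (CDF.thetaHF_mem_Icc hsupp) ht (not_le.1 hmid).le
    rw [hF1]
    nlinarith [min_le_left (p (thetaHF F) + c' t) qbar, F'.toFun_le_one t]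

lemma IsICC.integrableOn {F₀ : CDF θL θH} {Q : ℝ → ℝ} (hQ : IsICC qbar F₀ c' F Q)
    (hsupp : F.supp ⊆ Ioo θL θH) (hc : MonotoneOn c' (Ioo θL θH))
    (hc_int : IntegrableOn c' (Ioo θL θH)) : IntegrableOn Q (Ioo θL θH) := by
  obtain ⟨p, ⟨⟨M, hM⟩, hp, -⟩, hQp⟩ := hQ
  have hmeas : AEMeasurable (inducedAlloc qbar c' F p) (volume.restrict (Ioo θL θH)) :=
    aemeasurable_inducedAlloc (aemeasurable_restrict_of_monotoneOn measurableSet_Ioo hc)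
      (aemeasurable_restrict_of_monotoneOn measurableSet_Ioo (hp.mono Ioo_subset_Icc_self))
  have hbound : IntegrableOn (fun t => 3 * M + |qbar| + |c' t|) (Ioo θL θH) :=
    (integrableOn_const measure_Ioo_lt_top.ne).add hc_int.abs
  refine IntegrableOn.congr_fun (hbound.mono' hmeas.aestronglyMeasurable ?_)
    (fun t ht => (hQp t (Ioo_subset_Icc_self ht)).symm) measurableSet_Ioo
  refine (ae_restrict_iff' measurableSet_Ioo).2 (ae_of_all _ fun t ht => ?_)
  rw [Real.norm_eq_abs]
  have := abs_inducedAlloc_le (qbar := qbar) (c' := c') (F := F) (p := p) t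
  linarith [hM _ (CDF.thetaLF_mem_Icc hsupp), hM _ (CDF.thetaHF_mem_Icc hsupp),
    hM t (Ioo_subset_Icc_self ht)]

end InducedAlloc

lemma Vfun_sub_eq_add_integral {θL θH θ₀ : ℝ} {c c' c'' Q : ℝ → ℝ}
    (hc : CostAssumptions θL θH θ₀ c c' c'') (hQ : IntegrableOn Q (Ioo θL θH)) (u : ℝ) {θ : ℝ}
    (hθ : θ ∈ Icc θL θH) :
    Vfun θL Q u θ - c θ = (Vfun θL Q u θL - c θL) + ∫ t in θL..θ, (Q t - c' t) := by
  have hQθ : IntervalIntegrable Q volume θL θ :=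
    (intervalIntegrable_iff_integrableOn_Ioo_of_le hθ.1).2 (hQ.mono_set (Ioo_subset_Ioo_right hθ.2))
  have hcθ : IntervalIntegrable c' volume θL θ :=
    (intervalIntegrable_iff_integrableOn_Ioo_of_le hθ.1).2
      (hc.integrableOn_deriv.mono_set (Ioo_subset_Ioo_right hθ.2))
  rw [Vfun, Vfun, intervalIntegral.integral_sub hQθ hcθ, hc.integral_deriv hθ,
    intervalIntegral.integral_same]
  ring

theorem statement6_general {θL θH : ℝ} (hθ : θL < θH)
    (F₀ : CDF θL θH)
    (c c' c'' : ℝ → ℝ) (hc : CostAssumptions θL θH F₀.mean c c' c'')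
    (qbar : ℝ)
    (F : CDF θL θH) (hF : IsSignal F₀ F) (hsupp : F.supp ⊆ Set.Ioo θL θH)
    (Q : ℝ → ℝ) (hICC : IsICC qbar F₀ c' F Q) :
    ∀ u : ℝ, 0 ≤ u → IsIC F₀ c Q u F := by
  intro u _
  have hQ := hICC.integrableOn hsupp hc.monotoneOn_deriv hc.integrableOn_deriv
  obtain ⟨p, ⟨-, hp, hpconst, -⟩, hQp⟩ := hICC
  set P := IccExtend hθ.le fun t : Icc θL θH => p t
  have hPp : ∀ t ∈ Icc θL θH, P t = p t := fun t ht => IccExtend_of_mem hθ.le _ ht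
  have hP : Monotone P := (monotoneOn_iff_monotone.1 hp).IccExtend hθ.le
  refine ⟨hF, fun F' hF' => CDF.integ_le_integ_of_setIntegral_mul_sub_nonpos
    (hQ.sub hc.integrableOn_deriv) (fun θ hθ => Vfun_sub_eq_add_integral hc hQ u hθ) ?_⟩
  calc ∫ t in Ioo θL θH, (Q t - c' t) * (F.toFun t - F'.toFun t)
      ≤ ∫ t in Ioo θL θH, P t * (F.toFun t - F'.toFun t) := by
        refine setIntegral_mono_on (F.integrableOn_mul_toFun_sub F' (hQ.sub hc.integrableOn_deriv))
          (F.integrableOn_mul_toFun_sub F' ((hP.monotoneOn _).integrableOn_isCompact isCompact_Icc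
            |>.mono_set Ioo_subset_Icc_self)) measurableSet_Ioo fun t ht => ?_
        rw [hQp t (Ioo_subset_Icc_self ht), hPp t (Ioo_subset_Icc_self ht)]
        exact inducedAlloc_sub_mul_le hsupp hp F' (Ioo_subset_Icc_self ht)
    _ ≤ 0 := setIntegral_mul_toFun_sub_nonpos hθ hF hF' hP fun a b hab x hx y hy => by
        rw [hPp x (hab hx).1, hPp y (hab hy).1]
        exact hpconst a b hab x hx y hy

theorem statement6 {θL θH : ℝ} (hθL : 0 ≤ θL) (hθ : θL < θH)
    (F₀ : CDF θL θH) (hF₀ : IsPrior F₀)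
    (c c' c'' : ℝ → ℝ) (hc : CostAssumptions θL θH F₀.mean c c' c'')
    (qbar : ℝ) (hqbar : 0 < qbar)
    (F : CDF θL θH) (hF : IsSignal F₀ F) (hsupp : F.supp ⊆ Set.Ioo θL θH)
    (Q : ℝ → ℝ) (hICC : IsICC qbar F₀ c' F Q) :
    ∀ u : ℝ, 0 ≤ u → IsIC F₀ c Q u F :=
  statement6_general hθ F₀ c c' c'' hc qbar F hF hsupp Q hICC
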